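/- If a weight λ lies outside the permutohedron Π(2ρ) (the convex hull of the Weyl orbit of 2ρ), then λ is not connected, i.e., the firing span FS_{Φ⁺}(λ) is a proper subspace of V. -/

import Mathlib

/-!
Let `p` be the point of `Π(2ρ)` nearest to `λ` and `u = λ - p ≠ 0`, so that `⟪u, ·⟫` attains its
maximum over `Π(2ρ)` at `p`. Central-firing keeps `μ - u` on this face: if `⟪μ, α∨⟫ = 0`, the
reflection `s_α` moves `μ - u` by `⟪u, α∨⟫ α`, and maximality forces `⟪u, α⟫ = 0`; then
`μ - u + α ∈ Π(2ρ)`, because every vertex `w(2ρ)` satisfies `|⟪w(2ρ), α∨⟫| ≥ 2`. Hence every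
`μ - λ` is orthogonal to `u`.
-/

open scoped RealInnerProductSpace

noncomputable section

namespace CF

variable {V : Type*} [NormedAddCommGroup V] [InnerProductSpace ℝ V]

/-- The coroot `α∨ = 2α/⟨α,α⟩`. -/
def coroot (α : V) : V := (2 / ⟪α, α⟫) • α

/-- A reduced crystallographic root system in `V`. -/
def IsRootSystem (Φ : Set V) : Prop :=
  Φ.Finite ∧ (0 : V) ∉ Φ ∧ Submodule.span ℝ Φ = ⊤ ∧
    (∀ α ∈ Φ, ∀ β ∈ Φ, β - ⟪β, coroot α⟫ • α ∈ Φ) ∧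
    (∀ α ∈ Φ, ∀ t : ℝ, t • α ∈ Φ → t = 1 ∨ t = -1) ∧
    (∀ α ∈ Φ, ∀ β ∈ Φ, ∃ n : ℤ, ⟪β, coroot α⟫ = (n : ℝ))

/-- A choice of positive roots `Φ⁺ ⊆ Φ` (exactly one of `±α` is positive, and the positive
roots lie strictly on one side of a hyperplane). -/
def IsPositiveSystem (Φ Φp : Set V) : Prop :=
  Φp ⊆ Φ ∧ (∀ α ∈ Φ, (α ∈ Φp ∨ -α ∈ Φp) ∧ ¬(α ∈ Φp ∧ -α ∈ Φp)) ∧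
    ∃ ℓ : V →ₗ[ℝ] ℝ, ∀ α ∈ Φp, 0 < ℓ α

/-- The weight lattice `P = {v : ⟨v, α∨⟩ ∈ ℤ for all α ∈ Φ}`. -/
def weightLattice (Φ : Set V) : Set V :=
  {v | ∀ α ∈ Φ, ∃ n : ℤ, ⟪v, coroot α⟫ = (n : ℝ)}

/-- Central-firing: `λ → λ + α` whenever `α ∈ Φ⁺` and `⟨λ, α∨⟩ = 0`. -/
def fire (Φp : Set V) (lam mu : V) : Prop :=
  ∃ α ∈ Φp, ⟪lam, coroot α⟫ = 0 ∧ mu = lam + α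

/-- The Weyl group: the group of linear isometries generated by the reflections `s_α`, `α ∈ Φ`. -/
def weylGroup (Φ : Set V) : Subgroup (V ≃ₗᵢ[ℝ] V) :=
  Subgroup.closure {g | ∃ α ∈ Φ, ∀ v, g v = v - ⟪v, coroot α⟫ • α}

/-- `v` and `w` lie in the same Weyl group orbit. -/
def sameOrbit (Φ : Set V) (v w : V) : Prop := ∃ g ∈ weylGroup Φ, g v = w

def weylOrbit (Φ : Set V) (v : V) : Set V := {w | sameOrbit Φ v w}

/-- The root lattice `Q`. -/
def rootLattice (Φ : Set V) : AddSubgroup V := AddSubgroup.closure Φ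

/-- `Π^Q(λ)`: the points of the permutohedron `Π(λ) = ConvexHull(Wλ)` lying in `λ + Q`. -/
def permQ (Φ : Set V) (lam : V) : Set V :=
  {mu | mu ∈ convexHull ℝ (weylOrbit Φ lam) ∧ lam - mu ∈ rootLattice Φ}

def IsDominant (Δ : Set V) (lam : V) : Prop := ∀ a ∈ Δ, 0 ≤ ⟪lam, coroot a⟫

def IsStrictlyDominant (Δ : Set V) (lam : V) : Prop := ∀ a ∈ Δ, 0 < ⟪lam, coroot a⟫

/-- A minuscule weight: a nonzero dominant weight whose `Π^Q` consists of its Weyl orbit. -/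
def IsMinuscule (Φ Δ : Set V) (w : V) : Prop :=
  w ≠ 0 ∧ IsDominant Δ w ∧ ∀ mu ∈ permQ Φ w, sameOrbit Φ w mu

/-- `Δ` is a system of simple roots for the positive system `Φ⁺`. -/
def IsSimpleSystem (Φp : Set V) (Δ : Finset V) : Prop :=
  (Δ : Set V) ⊆ Φp ∧ LinearIndependent ℝ (fun a : (Δ : Set V) => (a : V)) ∧
    ∀ α ∈ Φp, ∃ c : V → ℝ, (∀ a ∈ Δ, 0 ≤ c a) ∧ α = ∑ a ∈ Δ, c a • a

def IsSimplyLaced (Φ : Set V) : Prop := ∀ α ∈ Φ, ∀ β ∈ Φ, ⟪α, α⟫ = ⟪β, β⟫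

/-- Irreducibility: `Φ` cannot be split into two nonempty mutually orthogonal parts. -/
def IsIrreducibleRS (Φ : Set V) : Prop :=
  ¬ ∃ S T : Set V, S.Nonempty ∧ T.Nonempty ∧ S ∪ T = Φ ∧ ∀ a ∈ S, ∀ b ∈ T, ⟪a, b⟫ = 0

/-- The firing span `FS_S(λ) = Span_ℝ{μ − λ : λ →* μ}`. -/
def firingSpan (Φp : Set V) (lam : V) : Submodule ℝ V :=
  Submodule.span ℝ {d | ∃ mu, Relation.ReflTransGen (fire Φp) lam mu ∧ d = mu - lam}

/-- Central-firing on Weyl orbits: `Wλ → Wμ` iff some representatives fire. -/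
def ofire (Φ Φp : Set V) (lam mu : V) : Prop :=
  ∃ lam' mu', sameOrbit Φ lam lam' ∧ sameOrbit Φ mu mu' ∧ fire Φp lam' mu'

/-- Connectivity of roots within a subset `Ψ` (via non-orthogonality). -/
def sameComponent (Ψ : Set V) (β γ : V) : Prop :=
  Relation.ReflTransGen (fun x y => x ∈ Ψ ∧ y ∈ Ψ ∧ ⟪x, y⟫ ≠ 0) β γ

/-- Confluence of central-firing from `λ`: all maximal firing sequences from `λ`
terminate at the same weight. -/
def ConfluentFrom (S : Set V) (lam : V) : Prop :=
  ∀ mu₁ mu₂ : V, Relation.ReflTransGen (fire S) lam mu₁ → (¬ ∃ ν, fire S mu₁ ν) →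
    Relation.ReflTransGen (fire S) lam mu₂ → (¬ ∃ ν, fire S mu₂ ν) → mu₁ = mu₂

open Submodule

lemma inner_coroot (x α : V) : ⟪x, coroot α⟫ = 2 / ⟪α, α⟫ * ⟪x, α⟫ :=
  real_inner_smul_right _ _ _

lemma inner_self_coroot {α : V} (hα : α ≠ 0) : ⟪α, coroot α⟫ = 2 := by
  rw [inner_coroot, div_mul_cancel₀ _ (inner_self_ne_zero.2 hα)]

lemma coroot_neg (α : V) : coroot (-α) = -coroot α := by
  simp [coroot]

lemma inner_map_coroot_map (g : V ≃ₗᵢ[ℝ] V) (x α : V) :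
    ⟪g x, coroot (g α)⟫ = ⟪x, coroot α⟫ := by
  rw [coroot, coroot, LinearIsometryEquiv.inner_map_map, ← map_smul,
    LinearIsometryEquiv.inner_map_map]

lemma reflection_orthogonal_singleton_apply (α v : V) :
    (ℝ ∙ α)ᗮ.reflection v = v - ⟪v, coroot α⟫ • α := by
  rw [reflection_orthogonal_apply, reflection_singleton_apply, coroot, real_inner_smul_right,
    real_inner_self_eq_norm_sq, real_inner_comm]
  module

lemma inner_reflection_coroot {α : V} (hα : α ≠ 0) (v : V) :
    ⟪(ℝ ∙ α)ᗮ.reflection v, coroot α⟫ = -⟪v, coroot α⟫ := by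
  rw [reflection_orthogonal_singleton_apply, inner_sub_left, real_inner_smul_left,
    inner_self_coroot hα]
  ring

section WeylGroup

variable {Φ : Set V}

lemma reflection_mem_weylGroup {α : V} (hα : α ∈ Φ) : (ℝ ∙ α)ᗮ.reflection ∈ weylGroup Φ :=
  Subgroup.subset_closure ⟨α, hα, reflection_orthogonal_singleton_apply α⟩

lemma mapsTo_of_mem_weylGroup (hre : ∀ α ∈ Φ, ∀ β ∈ Φ, β - ⟪β, coroot α⟫ • α ∈ Φ)
    {g : V ≃ₗᵢ[ℝ] V} (hg : g ∈ weylGroup Φ) : Set.MapsTo g Φ Φ := by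
  have hgen : ∀ g ∈ {g : V ≃ₗᵢ[ℝ] V | ∃ α ∈ Φ, ∀ v, g v = v - ⟪v, coroot α⟫ • α},
      Set.MapsTo g Φ Φ := by
    rintro g ⟨α, hα, hg⟩ β hβ
    exact (hg β).symm ▸ hre α hα β hβ
  induction hg using Subgroup.closure_induction'' with
  | mem g hg => exact hgen g hg
  | inv_mem g hg =>
    obtain ⟨α, hα, hgα⟩ := hg
    have : g = (ℝ ∙ α)ᗮ.reflection :=
      LinearIsometryEquiv.ext fun v =>
        (hgα v).trans (reflection_orthogonal_singleton_apply α v).symm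
    rw [this, reflection_inv, ← this]
    exact hgen g ⟨α, hα, hgα⟩
  | one => exact Set.mapsTo_id Φ
  | mul g h _ _ hg hh => exact hg.comp hh

lemma finite_weylGroup (hfin : Φ.Finite) (hspan : span ℝ Φ = ⊤)
    (hre : ∀ α ∈ Φ, ∀ β ∈ Φ, β - ⟪β, coroot α⟫ • α ∈ Φ) : Finite (weylGroup Φ) := by
  have := hfin.to_subtype
  refine Finite.of_injective (fun g : weylGroup Φ => (mapsTo_of_mem_weylGroup hre g.2).restrict)
    fun g h hgh => Subtype.ext <| LinearIsometryEquiv.toLinearEquiv_injective <|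
      LinearEquiv.toLinearMap_injective <| LinearMap.ext_on hspan fun β hβ => ?_
  exact congrArg Subtype.val (congrFun hgh ⟨β, hβ⟩)

lemma finite_weylOrbit (hfin : Φ.Finite) (hspan : span ℝ Φ = ⊤)
    (hre : ∀ α ∈ Φ, ∀ β ∈ Φ, β - ⟪β, coroot α⟫ • α ∈ Φ) (v : V) : (weylOrbit Φ v).Finite := by
  have := finite_weylGroup hfin hspan hre
  refine (Set.finite_range fun g : weylGroup Φ => (g : V ≃ₗᵢ[ℝ] V) v).subset ?_
  rintro w ⟨g, hg, rfl⟩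
  exact ⟨⟨g, hg⟩, rfl⟩

lemma mem_weylOrbit_self (v : V) : v ∈ weylOrbit Φ v :=
  ⟨1, one_mem _, rfl⟩

lemma map_mem_weylOrbit {g : V ≃ₗᵢ[ℝ] V} (hg : g ∈ weylGroup Φ) {v z : V}
    (hz : z ∈ weylOrbit Φ v) : g z ∈ weylOrbit Φ v := by
  obtain ⟨h, hh, rfl⟩ := hz
  exact ⟨g * h, mul_mem hg hh, rfl⟩

lemma map_mem_convexHull_weylOrbit {g : V ≃ₗᵢ[ℝ] V} (hg : g ∈ weylGroup Φ) {v z : V}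
    (hz : z ∈ convexHull ℝ (weylOrbit Φ v)) : g z ∈ convexHull ℝ (weylOrbit Φ v) := by
  have hpre : convexHull ℝ (weylOrbit Φ v) ⊆ g ⁻¹' convexHull ℝ (weylOrbit Φ v) :=
    convexHull_min (fun _ hw => subset_convexHull ℝ _ (map_mem_weylOrbit hg hw))
      ((convex_convexHull ℝ _).linear_preimage g.toLinearEquiv.toLinearMap)
  exact hpre hz

end WeylGroup

section PositiveSystem

variable {Φ : Set V}

lemma IsPositiveSystem.neg_mem_of_notMem {Φp : Set V} (hp : IsPositiveSystem Φ Φp) {α : V}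
    (hα : α ∈ Φ) (hn : α ∉ Φp) : -α ∈ Φp :=
  (hp.2.1 α hα).1.resolve_left hn

lemma IsPositiveSystem.inner_coroot_pos {Φp : Set V} (hp : IsPositiveSystem Φ Φp)
    (hre : ∀ α ∈ Φ, ∀ β ∈ Φ, β - ⟪β, coroot α⟫ • α ∈ Φ) {β γ : V} (hβ : β ∈ Φp) (hγ : γ ∈ Φp)
    (hrγ : (ℝ ∙ β)ᗮ.reflection γ ∉ Φp) : 0 < ⟪γ, coroot β⟫ := by
  have hneg : -(ℝ ∙ β)ᗮ.reflection γ ∈ Φp := by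
    refine hp.neg_mem_of_notMem ?_ hrγ
    rw [reflection_orthogonal_singleton_apply]
    exact hre β (hp.1 hβ) γ (hp.1 hγ)
  obtain ⟨-, -, ℓ, hℓ⟩ := hp
  have hsum : ℓ γ + ℓ (-(ℝ ∙ β)ᗮ.reflection γ) = ⟪γ, coroot β⟫ * ℓ β := by
    rw [reflection_orthogonal_singleton_apply, map_neg, map_sub, map_smul, smul_eq_mul]
    ring
  exact (mul_pos_iff_of_pos_right (hℓ β hβ)).1 (hsum ▸ add_pos (hℓ γ hγ) (hℓ _ hneg))

lemma two_le_inner_sum_coroot {Φp : Finset V} (hp : IsPositiveSystem Φ Φp) (h0 : (0 : V) ∉ Φ)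
    (hre : ∀ α ∈ Φ, ∀ β ∈ Φ, β - ⟪β, coroot α⟫ • α ∈ Φ) {β : V} (hβ : β ∈ Φp) :
    2 ≤ ⟪∑ γ ∈ Φp, γ, coroot β⟫ := by
  classical
  have hβ0 : β ≠ 0 := fun h => h0 (h ▸ hp.1 hβ)
  set r := (ℝ ∙ β)ᗮ.reflection
  have hA : ∑ γ ∈ Φp with r γ ∈ Φp, ⟪γ, coroot β⟫ = 0 := by
    refine Finset.sum_involution (fun γ _ => r γ) (fun γ _ => ?_) (fun γ _ hγ hfix => ?_)
      (fun γ hγ => ?_) (fun γ _ => reflection_reflection _ γ)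
    · rw [inner_reflection_coroot hβ0]
      ring
    · have := inner_reflection_coroot hβ0 γ
      rw [hfix] at this
      exact hγ (by linarith)
    · simpa [r, reflection_reflection] using (Finset.mem_filter.1 hγ).symm
  have hB : 2 ≤ ∑ γ ∈ Φp with r γ ∉ Φp, ⟪γ, coroot β⟫ := by
    have hrβ : r β ∉ Φp := by
      rw [reflection_orthogonalComplement_singleton_eq_neg]
      exact fun h => (hp.2.1 β (hp.1 hβ)).2 ⟨hβ, h⟩
    rw [← inner_self_coroot hβ0]
    exact Finset.single_le_sum (fun γ hγ => (hp.inner_coroot_pos hre hβ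
      (Finset.mem_filter.1 hγ).1 (Finset.mem_filter.1 hγ).2).le) (Finset.mem_filter.2 ⟨hβ, hrβ⟩)
  rw [sum_inner, ← Finset.sum_filter_add_sum_filter_not Φp (fun γ => r γ ∈ Φp), hA, zero_add]
  exact hB

lemma two_le_abs_inner_coroot_of_mem_weylOrbit {Φp : Finset V} (hp : IsPositiveSystem Φ Φp)
    (h0 : (0 : V) ∉ Φ) (hre : ∀ α ∈ Φ, ∀ β ∈ Φ, β - ⟪β, coroot α⟫ • α ∈ Φ) {α z : V}
    (hα : α ∈ Φ) (hz : z ∈ weylOrbit Φ (∑ γ ∈ Φp, γ)) : 2 ≤ |⟪z, coroot α⟫| := by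
  obtain ⟨g, hg, rfl⟩ := hz
  have hβ : g.symm α ∈ Φ := mapsTo_of_mem_weylGroup hre (inv_mem hg) hα
  rw [← g.apply_symm_apply α, inner_map_coroot_map]
  by_cases hβp : g.symm α ∈ Φp
  · exact le_abs.2 (Or.inl (two_le_inner_sum_coroot hp h0 hre hβp))
  · have h := two_le_inner_sum_coroot hp h0 hre (hp.neg_mem_of_notMem hβ hβp)
    rw [coroot_neg, inner_neg_right] at h
    exact le_abs.2 (Or.inr h)

end PositiveSystem

lemma add_smul_mem_segment {z α : V} {k : ℝ} (hk : 2 ≤ |k|) :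
    z + (1 - k / 2) • α ∈ segment ℝ z (z - k • α) := by
  have hk0 : k ≠ 0 := by rintro rfl; norm_num at hk
  have hinv : |1 / k| ≤ 1 / 2 := by
    rw [abs_div, abs_one]
    exact one_div_le_one_div_of_le two_pos hk
  refine ⟨1 / 2 + 1 / k, 1 / 2 - 1 / k, by linarith [neg_abs_le (1 / k)],
    by linarith [le_abs_self (1 / k)], by ring, ?_⟩
  have hcoef : (1 / 2 - 1 / k) * k = k / 2 - 1 := by field_simp
  rw [smul_sub, smul_smul, hcoef]
  module

/-- The affine map `z ↦ z + (1 - ⟪z, α∨⟫ / 2) • α` sends each vertex `z`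
into the segment `[z, s_α z]` and agrees with `x ↦ x + α` on the hyperplane `⟪x, α∨⟫ = 0`. -/
lemma add_mem_convexHull_of_inner_coroot_eq_zero {O : Set V} {α x : V}
    (hrefl : ∀ z ∈ O, z - ⟪z, coroot α⟫ • α ∈ O) (htwo : ∀ z ∈ O, 2 ≤ |⟪z, coroot α⟫|)
    (hx : x ∈ convexHull ℝ O) (horth : ⟪x, coroot α⟫ = 0) : x + α ∈ convexHull ℝ O := by
  let F : V →ᵃ[ℝ] V :=
    (LinearMap.id - (innerₛₗ ℝ (coroot α)).smulRight ((1 / 2 : ℝ) • α)).toAffineMap +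
      AffineMap.const ℝ V α
  have hF : ∀ z, F z = z + (1 - ⟪z, coroot α⟫ / 2) • α := fun z => by
    simp only [F, AffineMap.coe_add, Pi.add_apply, LinearMap.coe_toAffineMap, LinearMap.sub_apply,
      LinearMap.id_apply, LinearMap.smulRight_apply, innerₛₗ_apply_apply, AffineMap.const_apply,
      real_inner_comm]
    module
  have hpre : convexHull ℝ O ⊆ F ⁻¹' convexHull ℝ O :=
    convexHull_min (fun z hz => by
        rw [Set.mem_preimage, hF]
        exact segment_subset_convexHull hz (hrefl z hz) (add_smul_mem_segment (htwo z hz)))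
      ((convex_convexHull ℝ O).affine_preimage F)
  simpa [hF, horth] using hpre hx

section Firing

variable {Φp K : Set V}

lemma inner_eq_zero_of_inner_coroot_mul_nonpos {u α : V} (h : ⟪u, coroot α⟫ * ⟪u, α⟫ ≤ 0) :
    ⟪u, α⟫ = 0 := by
  rcases eq_or_ne α 0 with rfl | hα
  · exact inner_zero_right u
  have hpos : 0 < 2 / ⟪α, α⟫ := div_pos two_pos (real_inner_self_pos.2 hα)
  rw [inner_coroot, mul_assoc] at h
  by_contra hne
  exact (mul_pos hpos (mul_self_pos.2 hne)).not_ge h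

lemma sub_mem_face_of_fire (hrefl : ∀ α ∈ Φp, ∀ y ∈ K, y - ⟪y, coroot α⟫ • α ∈ K)
    (hadd : ∀ α ∈ Φp, ∀ x ∈ K, ⟪x, coroot α⟫ = 0 → x + α ∈ K) {u : V} {c : ℝ}
    (hmax : ∀ y ∈ K, ⟪u, y⟫ ≤ c) {b b' : V} (hb : b - u ∈ K ∧ ⟪u, b - u⟫ = c)
    (hfire : fire Φp b b') : b' - u ∈ K ∧ ⟪u, b' - u⟫ = c := by
  obtain ⟨α, hα, hbα, rfl⟩ := hfire
  have hshift : ⟪b - u, coroot α⟫ = -⟪u, coroot α⟫ := by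
    rw [inner_sub_left, hbα, zero_sub]
  have huα : ⟪u, α⟫ = 0 := by
    have h := hmax _ (hrefl α hα _ hb.1)
    rw [hshift, neg_smul, sub_neg_eq_add, inner_add_right, hb.2, real_inner_smul_right] at h
    exact inner_eq_zero_of_inner_coroot_mul_nonpos (by linarith)
  have hucoroot : ⟪u, coroot α⟫ = 0 := by rw [inner_coroot, huα, mul_zero]
  rw [add_sub_right_comm, inner_add_right, huα, add_zero]
  exact ⟨hadd α hα _ hb.1 (by rw [hshift, hucoroot, neg_zero]), hb.2⟩

lemma firingSpan_ne_top_of_forall_inner_sub_nonpos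
    (hrefl : ∀ α ∈ Φp, ∀ y ∈ K, y - ⟪y, coroot α⟫ • α ∈ K)
    (hadd : ∀ α ∈ Φp, ∀ x ∈ K, ⟪x, coroot α⟫ = 0 → x + α ∈ K) {lam p : V} (hp : p ∈ K)
    (hmax : ∀ y ∈ K, ⟪lam - p, y - p⟫ ≤ 0) (hne : lam ≠ p) : firingSpan Φp lam ≠ ⊤ := by
  set u := lam - p
  have hface : ∀ μ, Relation.ReflTransGen (fire Φp) lam μ → μ - u ∈ K ∧ ⟪u, μ - u⟫ = ⟪u, p⟫ := by
    intro μ h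
    induction h with
    | refl => rw [sub_sub_cancel]; exact ⟨hp, rfl⟩
    | tail _ hfire ih =>
      refine sub_mem_face_of_fire hrefl hadd (fun y hy => ?_) ih hfire
      linarith [hmax y hy, inner_sub_right (𝕜 := ℝ) u y p]
  have hle : firingSpan Φp lam ≤ (ℝ ∙ u)ᗮ := by
    refine span_le.2 ?_
    rintro _ ⟨μ, hμ, rfl⟩
    rw [SetLike.mem_coe, mem_orthogonal_singleton_iff_inner_right,
      show μ - lam = (μ - u) - (lam - u) by abel, inner_sub_right, (hface μ hμ).2,
      sub_sub_cancel, sub_self]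
  refine ne_top_of_le_ne_top ?_ hle
  rw [Ne, orthogonal_eq_top_iff, span_singleton_eq_bot]
  exact sub_ne_zero.2 hne

end Firing

theorem not_connected_outside_two_rho_general (Φ Φp : Finset V)
    (hΦ : IsRootSystem (Φ : Set V)) (hp : IsPositiveSystem (Φ : Set V) (Φp : Set V))
    (lam : V)
    (hout : lam ∉ convexHull ℝ (weylOrbit (Φ : Set V) (∑ α ∈ Φp, α))) :
    firingSpan (Φp : Set V) lam ≠ ⊤ := by
  obtain ⟨-, h0, hspan, hre, -, -⟩ := hΦ
  set O := weylOrbit (Φ : Set V) (∑ α ∈ Φp, α)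
  have hconv : Convex ℝ (convexHull ℝ O) := convex_convexHull ℝ O
  have hcompact : IsCompact (convexHull ℝ O) :=
    (finite_weylOrbit Φ.finite_toSet hspan hre _).isCompact_convexHull ℝ
  obtain ⟨p, hpmem, hpmin⟩ := exists_norm_eq_iInf_of_complete_convex
    ⟨_, subset_convexHull ℝ O (mem_weylOrbit_self _)⟩ hcompact.isComplete hconv lam
  have hrefl : ∀ α ∈ (Φ : Set V), ∀ z ∈ O, z - ⟪z, coroot α⟫ • α ∈ O := fun α hα z hz => by
    rw [← reflection_orthogonal_singleton_apply]
    exact map_mem_weylOrbit (reflection_mem_weylGroup hα) hz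
  refine firingSpan_ne_top_of_forall_inner_sub_nonpos (fun α hα y hy => ?_)
    (fun α hα x hx horth => ?_) hpmem ((norm_eq_iInf_iff_real_inner_le_zero hconv hpmem).1 hpmin)
    (by rintro rfl; exact hout hpmem)
  · rw [← reflection_orthogonal_singleton_apply]
    exact map_mem_convexHull_weylOrbit (reflection_mem_weylGroup (hp.1 hα)) hy
  · exact add_mem_convexHull_of_inner_coroot_eq_zero (hrefl α (hp.1 hα))
      (fun z hz => two_le_abs_inner_coroot_of_mem_weylOrbit hp h0 hre (hp.1 hα) hz) hx horth

/-- a weight outside the permutohedron `Π(2ρ)` is not connected, i.e. its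
firing span is a proper subspace of `V`.  Here `2ρ = ∑_{α ∈ Φ⁺} α`. -/
theorem not_connected_outside_two_rho (Φ Φp : Finset V)
    (hΦ : IsRootSystem (Φ : Set V)) (hp : IsPositiveSystem (Φ : Set V) (Φp : Set V))
    (lam : V) (hlam : lam ∈ weightLattice (Φ : Set V))
    (hout : lam ∉ convexHull ℝ (weylOrbit (Φ : Set V) (∑ α ∈ Φp, α))) :
    firingSpan (Φp : Set V) lam ≠ ⊤ :=
  not_connected_outside_two_rho_general Φ Φp hΦ hp lam hout

end CF
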